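/- Threshold invariant (property 3 in the proof of Theorem 1). In every reachable configuration of the bucketing system, every collection A satisfies: every allegation a ∈ A has threshold t_a ≤ Min(A) + |A|; hence every allegation in A can be revealed once Min(A) more matching allegations are available, and a collection reaching bucket 0 satisfies all of its thresholds. -/
import Mathlib


/-- An allegation: a distinct identifier, a metadata value, and a reveal threshold. -/
structure Allegation where
  id : ℕ
  md : ℕ
  thr : ℕ
deriving DecidableEq

/-- A collection: a finite set of allegations, a finite set of occupied buckets,
and a flag indicating whether the collection has been revealed. -/
structure Collection where
  allegs : Finset Allegation
  buckets : Finset ℕ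
  revealed : Bool
deriving DecidableEq

namespace Collection
/-- `Min(A)`: the least occupied bucket. -/
noncomputable def bmin (A : Collection) : ℕ := sInf (A.buckets : Set ℕ)
/-- `Max(A)`: the greatest occupied bucket. -/
noncomputable def bmax (A : Collection) : ℕ := sSup (A.buckets : Set ℕ)
end Collection

/-- A configuration is a finite set of collections. -/
abbrev Config := Finset Collection

/-- The transition rules R1–R5 of the bucketing algorithm. -/
inductive Step : Config → Config → Prop
  /-- R1 (file): a new allegation `a` (with a fresh identifier and threshold `≥ 2`)
  is added as a fresh unrevealed singleton collection with bucket set `{t_a - 1}`. -/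
  | file (C : Config) (a : Allegation)
      (hthr : 2 ≤ a.thr)
      (hfresh : ∀ B ∈ C, ∀ b ∈ B.allegs, b.id ≠ a.id) :
      Step C (insert ⟨{a}, {a.thr - 1}, false⟩ C)
  /-- R2 (copy): if `A` is unrevealed, `Min(A) ≥ 1` and every `a ∈ A` has
  `t_a < Min(A) + |A|`, then `Min(A) - 1` is added to `buckets(A)`. -/
  | copy (C : Config) (A : Collection) (hA : A ∈ C)
      (hrev : A.revealed = false)
      (hmin : 1 ≤ A.bmin)
      (hthr : ∀ a ∈ A.allegs, a.thr < A.bmin + A.allegs.card) :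
      Step C (insert ⟨A.allegs, insert (A.bmin - 1) A.buckets, false⟩ (C.erase A))
  /-- R3 (coalesce): two distinct unrevealed collections with overlapping bucket
  sets and pairwise matching allegations coalesce. -/
  | coalesce (C : Config) (A B : Collection)
      (hA : A ∈ C) (hB : B ∈ C) (hne : A ≠ B)
      (hArev : A.revealed = false) (hBrev : B.revealed = false)
      (hover : (A.buckets ∩ B.buckets).Nonempty)
      (hmatch : ∀ a ∈ A.allegs, ∀ b ∈ B.allegs, a.md = b.md) :
      Step C (insert ⟨A.allegs ∪ B.allegs, A.buckets ∪ B.buckets, false⟩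
        ((C.erase A).erase B))
  /-- R4 (reveal): an unrevealed collection occupying bucket 0 is marked revealed;
  its bucket set becomes `{0, 1, …, |A|}`. -/
  | reveal (C : Config) (A : Collection) (hA : A ∈ C)
      (hrev : A.revealed = false) (h0 : (0 : ℕ) ∈ A.buckets) :
      Step C (insert ⟨A.allegs, Finset.range (A.allegs.card + 1), true⟩ (C.erase A))
  /-- R5 (absorb): a revealed collection absorbs an unrevealed one with overlapping
  bucket set and matching allegations; the result is revealed with bucket set
  `{0, 1, …, |A ∪ B|}`. -/
  | absorb (C : Config) (A B : Collection)
      (hA : A ∈ C) (hB : B ∈ C)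
      (hArev : A.revealed = true) (hBrev : B.revealed = false)
      (hover : (A.buckets ∩ B.buckets).Nonempty)
      (hmatch : ∀ a ∈ A.allegs, ∀ b ∈ B.allegs, a.md = b.md) :
      Step C (insert ⟨A.allegs ∪ B.allegs,
        Finset.range ((A.allegs ∪ B.allegs).card + 1), true⟩
        ((C.erase A).erase B))

/-- A configuration is reachable if it is obtained from the empty configuration
by finitely many applications of R1–R5. -/
def Reachable (C : Config) : Prop := Relation.ReflTransGen Step ∅ C

/-- A configuration is saturated if none of the rules R2–R5 is applicable. -/
def Saturated (C : Config) : Prop :=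
  (¬ ∃ A ∈ C, A.revealed = false ∧ 1 ≤ A.bmin ∧
      ∀ a ∈ A.allegs, a.thr < A.bmin + A.allegs.card) ∧
  (¬ ∃ A ∈ C, ∃ B ∈ C, A ≠ B ∧ A.revealed = false ∧ B.revealed = false ∧
      (A.buckets ∩ B.buckets).Nonempty ∧
      ∀ a ∈ A.allegs, ∀ b ∈ B.allegs, a.md = b.md) ∧
  (¬ ∃ A ∈ C, A.revealed = false ∧ (0 : ℕ) ∈ A.buckets) ∧
  (¬ ∃ A ∈ C, ∃ B ∈ C, A.revealed = true ∧ B.revealed = false ∧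
      (A.buckets ∩ B.buckets).Nonempty ∧
      ∀ a ∈ A.allegs, ∀ b ∈ B.allegs, a.md = b.md)

/-- The set of all allegations filed so far (the union of all collections). -/
def filedAllegs (C : Config) : Finset Allegation := C.sup Collection.allegs


namespace SAEAux

lemma bmin_le {A : Collection} {x : ℕ} (hx : x ∈ A.buckets) : A.bmin ≤ x :=
  Nat.sInf_le (Finset.mem_coe.mpr hx)

lemma le_bmax {A : Collection} {x : ℕ} (hx : x ∈ A.buckets) : x ≤ A.bmax :=
  le_csSup A.buckets.bddAbove (Finset.mem_coe.mpr hx)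

lemma bmin_mem {A : Collection} (h : A.buckets.Nonempty) : A.bmin ∈ A.buckets :=
  Finset.mem_coe.mp (Nat.sInf_mem (Finset.coe_nonempty.mpr h))

lemma bmax_mem {A : Collection} (h : A.buckets.Nonempty) : A.bmax ∈ A.buckets :=
  Finset.mem_coe.mp (Nat.sSup_mem (Finset.coe_nonempty.mpr h) A.buckets.bddAbove)

/-- The strengthened invariant. -/
def Inv (C : Config) : Prop :=
  (∀ A ∈ C, A.buckets.Nonempty) ∧
  (∀ A ∈ C, ∀ B ∈ C, A ≠ B → Disjoint A.allegs B.allegs) ∧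
  (∀ A ∈ C, ∀ a ∈ A.allegs, a.thr ≤ A.bmin + A.allegs.card) ∧
  (∀ A ∈ C, A.revealed = false → ∃ a ∈ A.allegs, A.bmax < a.thr) ∧
  (∀ A ∈ C, A.revealed = true → A.buckets = Finset.range (A.allegs.card + 1))

lemma step_inv {C D : Config} (h : Step C D) (hC : Inv C) : Inv D := by
  obtain ⟨h1, h2, h3, h4, h5⟩ := hC
  cases h with
  | file a hthr hfresh =>
      set N : Collection := ⟨{a}, {a.thr - 1}, false⟩ with hN
      have hbminN : N.bmin = a.thr - 1 := by
        simp [Collection.bmin, hN]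
      have hbmaxN : N.bmax = a.thr - 1 := by
        simp [Collection.bmax, hN]
      refine ⟨?_, ?_, ?_, ?_, ?_⟩
      · intro X hX
        rcases Finset.mem_insert.mp hX with rfl | hX
        · exact ⟨a.thr - 1, by simp [hN]⟩
        · exact h1 X hX
      · intro X hX Y hY hxy
        have hdNC : ∀ Y ∈ C, Disjoint N.allegs Y.allegs := by
          intro Y hY
          simp only [hN, Finset.disjoint_singleton_left]
          intro ha
          exact hfresh Y hY a ha rfl
        rcases Finset.mem_insert.mp hX with rfl | hX <;>
          rcases Finset.mem_insert.mp hY with rfl | hY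
        · exact absurd rfl hxy
        · exact hdNC Y hY
        · exact (hdNC X hX).symm
        · exact h2 X hX Y hY hxy
      · intro X hX b hb
        rcases Finset.mem_insert.mp hX with rfl | hX
        · have : b = a := by simpa [hN] using hb
          subst this
          have hcard : N.allegs.card = 1 := by simp [hN]
          rw [hbminN, hcard]; omega
        · exact h3 X hX b hb
      · intro X hX hrevX
        rcases Finset.mem_insert.mp hX with rfl | hX
        · exact ⟨a, by simp [hN], by rw [hbmaxN]; omega⟩
        · exact h4 X hX hrevX
      · intro X hX hrevX
        rcases Finset.mem_insert.mp hX with rfl | hX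
        · simp [hN] at hrevX
        · exact h5 X hX hrevX
  | copy A hA hrev hmin hthr =>
      set N : Collection := ⟨A.allegs, insert (A.bmin - 1) A.buckets, false⟩ with hN
      have hAne : A.buckets.Nonempty := h1 A hA
      have hNne : N.buckets.Nonempty := ⟨A.bmin - 1, by simp [hN]⟩
      have hbk : N.buckets = insert (A.bmin - 1) A.buckets := by rw [hN]
      have hbminN : A.bmin - 1 ≤ N.bmin := by
        have hmem : N.bmin ∈ N.buckets := bmin_mem hNne
        rw [hbk, Finset.mem_insert] at hmem
        rcases hmem with h | h
        · omega
        · have := bmin_le h; omega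
      have hbmaxN : N.bmax ≤ A.bmax := by
        apply csSup_le (Finset.coe_nonempty.mpr hNne)
        intro x hx
        simp only [hN, Finset.coe_insert, Set.mem_insert_iff, Finset.mem_coe] at hx
        rcases hx with rfl | hx
        · have := le_bmax (bmin_mem hAne); omega
        · exact le_bmax hx
      refine ⟨?_, ?_, ?_, ?_, ?_⟩
      · intro X hX
        rcases Finset.mem_insert.mp hX with rfl | hX
        · exact hNne
        · exact h1 X (Finset.mem_of_mem_erase hX)
      · intro X hX Y hY hxy
        have hd : ∀ Y ∈ C.erase A, Disjoint N.allegs Y.allegs := by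
          intro Y hY
          have hYA : Y ≠ A := Finset.ne_of_mem_erase hY
          have : Disjoint A.allegs Y.allegs :=
            h2 A hA Y (Finset.mem_of_mem_erase hY) hYA.symm
          simpa [hN] using this
        rcases Finset.mem_insert.mp hX with rfl | hX <;>
          rcases Finset.mem_insert.mp hY with rfl | hY
        · exact absurd rfl hxy
        · exact hd Y hY
        · exact (hd X hX).symm
        · exact h2 X (Finset.mem_of_mem_erase hX) Y (Finset.mem_of_mem_erase hY) hxy
      · intro X hX b hb
        rcases Finset.mem_insert.mp hX with rfl | hX
        · have hb' : b ∈ A.allegs := by simpa [hN] using hb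
          have := hthr b hb'
          have hcard : N.allegs.card = A.allegs.card := by simp [hN]
          rw [hcard]; omega
        · exact h3 X (Finset.mem_of_mem_erase hX) b hb
      · intro X hX hrevX
        rcases Finset.mem_insert.mp hX with rfl | hX
        · obtain ⟨a0, ha0, hlt⟩ := h4 A hA hrev
          exact ⟨a0, by simpa [hN] using ha0, by omega⟩
        · exact h4 X (Finset.mem_of_mem_erase hX) hrevX
      · intro X hX hrevX
        rcases Finset.mem_insert.mp hX with rfl | hX
        · simp [hN] at hrevX
        · exact h5 X (Finset.mem_of_mem_erase hX) hrevX
  | coalesce A B hA hB hne hArev hBrev hover hmatch =>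
      set N : Collection := ⟨A.allegs ∪ B.allegs, A.buckets ∪ B.buckets, false⟩ with hN
      have hAne : A.buckets.Nonempty := h1 A hA
      have hBne : B.buckets.Nonempty := h1 B hB
      have hNne : N.buckets.Nonempty := by
        obtain ⟨x, hx⟩ := hAne
        exact ⟨x, by simp [hN, Finset.mem_union]; exact Or.inl hx⟩
      have hdisj : Disjoint A.allegs B.allegs := h2 A hA B hB hne
      have hcard : N.allegs.card = A.allegs.card + B.allegs.card := by
        simp [hN, Finset.card_union_of_disjoint hdisj]
      obtain ⟨x, hx⟩ := hover
      have hxA : x ∈ A.buckets := (Finset.mem_inter.mp hx).1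
      have hxB : x ∈ B.buckets := (Finset.mem_inter.mp hx).2
      -- span bounds
      obtain ⟨a0, ha0, ha0lt⟩ := h4 A hA hArev
      obtain ⟨b0, hb0, hb0lt⟩ := h4 B hB hBrev
      have hspanA : A.bmax < A.bmin + A.allegs.card :=
        lt_of_lt_of_le ha0lt (h3 A hA a0 ha0)
      have hspanB : B.bmax < B.bmin + B.allegs.card :=
        lt_of_lt_of_le hb0lt (h3 B hB b0 hb0)
      have hAB : A.bmin < B.bmin + B.allegs.card :=
        lt_of_le_of_lt (le_trans (bmin_le hxA) (le_bmax hxB)) hspanB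
      have hBA : B.bmin < A.bmin + A.allegs.card :=
        lt_of_le_of_lt (le_trans (bmin_le hxB) (le_bmax hxA)) hspanA
      have hminN : A.bmin ≤ N.bmin ∨ B.bmin ≤ N.bmin := by
        have hmem : N.bmin ∈ N.buckets := bmin_mem hNne
        simp only [hN, Finset.mem_union] at hmem
        rcases hmem with h | h
        · exact Or.inl (bmin_le h)
        · exact Or.inr (bmin_le h)
      have erase2 : ∀ X ∈ (C.erase A).erase B, X ∈ C ∧ X ≠ A ∧ X ≠ B := by
        intro X hX
        have hX1 := Finset.mem_of_mem_erase hX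
        exact ⟨Finset.mem_of_mem_erase hX1, Finset.ne_of_mem_erase hX1,
          Finset.ne_of_mem_erase hX⟩
      refine ⟨?_, ?_, ?_, ?_, ?_⟩
      · intro X hX
        rcases Finset.mem_insert.mp hX with rfl | hX
        · exact hNne
        · exact h1 X (erase2 X hX).1
      · intro X hX Y hY hxy
        have hd : ∀ Y ∈ (C.erase A).erase B, Disjoint N.allegs Y.allegs := by
          intro Y hY
          obtain ⟨hYC, hYA, hYB⟩ := erase2 Y hY
          have d1 : Disjoint A.allegs Y.allegs := h2 A hA Y hYC (Ne.symm hYA)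
          have d2 : Disjoint B.allegs Y.allegs := h2 B hB Y hYC (Ne.symm hYB)
          simp only [hN, Finset.disjoint_union_left]
          exact ⟨d1, d2⟩
        rcases Finset.mem_insert.mp hX with rfl | hX <;>
          rcases Finset.mem_insert.mp hY with rfl | hY
        · exact absurd rfl hxy
        · exact hd Y hY
        · exact (hd X hX).symm
        · exact h2 X (erase2 X hX).1 Y (erase2 Y hY).1 hxy
      · intro X hX c hc
        rcases Finset.mem_insert.mp hX with rfl | hX
        · rw [hcard]
          have hc' : c ∈ A.allegs ∪ B.allegs := by simpa [hN] using hc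
          rcases Finset.mem_union.mp hc' with hcA | hcB
          · have := h3 A hA c hcA
            rcases hminN with hm | hm
            · omega
            · omega
          · have := h3 B hB c hcB
            rcases hminN with hm | hm
            · omega
            · omega
        · exact h3 X (erase2 X hX).1 c hc
      · intro X hX hrevX
        rcases Finset.mem_insert.mp hX with rfl | hX
        · have hmem : N.bmax ∈ N.buckets := bmax_mem hNne
          simp only [hN, Finset.mem_union] at hmem
          rcases hmem with h | h
          · exact ⟨a0, by simp [hN, Finset.mem_union]; exact Or.inl ha0,
              lt_of_le_of_lt (le_bmax h) ha0lt⟩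
          · exact ⟨b0, by simp [hN, Finset.mem_union]; exact Or.inr hb0,
              lt_of_le_of_lt (le_bmax h) hb0lt⟩
        · exact h4 X (erase2 X hX).1 hrevX
      · intro X hX hrevX
        rcases Finset.mem_insert.mp hX with rfl | hX
        · simp [hN] at hrevX
        · exact h5 X (erase2 X hX).1 hrevX
  | reveal A hA hrev h0 =>
      set N : Collection := ⟨A.allegs, Finset.range (A.allegs.card + 1), true⟩ with hN
      have hbminA : A.bmin = 0 := Nat.le_zero.mp (bmin_le h0)
      refine ⟨?_, ?_, ?_, ?_, ?_⟩
      · intro X hX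
        rcases Finset.mem_insert.mp hX with rfl | hX
        · exact ⟨0, by simp [hN]⟩
        · exact h1 X (Finset.mem_of_mem_erase hX)
      · intro X hX Y hY hxy
        have hd : ∀ Y ∈ C.erase A, Disjoint N.allegs Y.allegs := by
          intro Y hY
          have : Disjoint A.allegs Y.allegs :=
            h2 A hA Y (Finset.mem_of_mem_erase hY) (Finset.ne_of_mem_erase hY).symm
          simpa [hN] using this
        rcases Finset.mem_insert.mp hX with rfl | hX <;>
          rcases Finset.mem_insert.mp hY with rfl | hY
        · exact absurd rfl hxy
        · exact hd Y hY
        · exact (hd X hX).symm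
        · exact h2 X (Finset.mem_of_mem_erase hX) Y (Finset.mem_of_mem_erase hY) hxy
      · intro X hX b hb
        rcases Finset.mem_insert.mp hX with rfl | hX
        · have hb' : b ∈ A.allegs := by simpa [hN] using hb
          have := h3 A hA b hb'
          have hcard : N.allegs.card = A.allegs.card := by simp [hN]
          rw [hcard]; omega
        · exact h3 X (Finset.mem_of_mem_erase hX) b hb
      · intro X hX hrevX
        rcases Finset.mem_insert.mp hX with rfl | hX
        · simp [hN] at hrevX
        · exact h4 X (Finset.mem_of_mem_erase hX) hrevX
      · intro X hX hrevX
        rcases Finset.mem_insert.mp hX with rfl | hX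
        · simp [hN]
        · exact h5 X (Finset.mem_of_mem_erase hX) hrevX
  | absorb A B hA hB hArev hBrev hover hmatch =>
      set N : Collection := ⟨A.allegs ∪ B.allegs,
        Finset.range ((A.allegs ∪ B.allegs).card + 1), true⟩ with hN
      have hdisj : Disjoint A.allegs B.allegs := by
        apply h2 A hA B hB
        intro hEq
        rw [hEq] at hArev
        rw [hBrev] at hArev
        simp at hArev
      have hcard : (A.allegs ∪ B.allegs).card = A.allegs.card + B.allegs.card :=
        Finset.card_union_of_disjoint hdisj
      obtain ⟨x, hx⟩ := hover
      have hxA : x ∈ A.buckets := (Finset.mem_inter.mp hx).1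
      have hxB : x ∈ B.buckets := (Finset.mem_inter.mp hx).2
      have hAbuck := h5 A hA hArev
      have hxle : x ≤ A.allegs.card := by
        rw [hAbuck] at hxA
        have := Finset.mem_range.mp hxA
        omega
      have hbminA : A.bmin = 0 := by
        apply Nat.le_zero.mp
        apply bmin_le
        rw [hAbuck]
        simp
      have erase2 : ∀ X ∈ (C.erase A).erase B, X ∈ C ∧ X ≠ A ∧ X ≠ B := by
        intro X hX
        have hX1 := Finset.mem_of_mem_erase hX
        exact ⟨Finset.mem_of_mem_erase hX1, Finset.ne_of_mem_erase hX1,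
          Finset.ne_of_mem_erase hX⟩
      refine ⟨?_, ?_, ?_, ?_, ?_⟩
      · intro X hX
        rcases Finset.mem_insert.mp hX with rfl | hX
        · exact ⟨0, by simp [hN]⟩
        · exact h1 X (erase2 X hX).1
      · intro X hX Y hY hxy
        have hd : ∀ Y ∈ (C.erase A).erase B, Disjoint N.allegs Y.allegs := by
          intro Y hY
          obtain ⟨hYC, hYA, hYB⟩ := erase2 Y hY
          have d1 : Disjoint A.allegs Y.allegs := h2 A hA Y hYC (Ne.symm hYA)
          have d2 : Disjoint B.allegs Y.allegs := h2 B hB Y hYC (Ne.symm hYB)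
          simp only [hN, Finset.disjoint_union_left]
          exact ⟨d1, d2⟩
        rcases Finset.mem_insert.mp hX with rfl | hX <;>
          rcases Finset.mem_insert.mp hY with rfl | hY
        · exact absurd rfl hxy
        · exact hd Y hY
        · exact (hd X hX).symm
        · exact h2 X (erase2 X hX).1 Y (erase2 Y hY).1 hxy
      · intro X hX c hc
        rcases Finset.mem_insert.mp hX with rfl | hX
        · have hcardN : N.allegs.card = A.allegs.card + B.allegs.card := by
            simp [hN, hcard]
          rw [hcardN]
          have hc' : c ∈ A.allegs ∪ B.allegs := by simpa [hN] using hc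
          rcases Finset.mem_union.mp hc' with hcA | hcB
          · have := h3 A hA c hcA
            omega
          · have := h3 B hB c hcB
            have hBx : B.bmin ≤ x := bmin_le hxB
            omega
        · exact h3 X (erase2 X hX).1 c hc
      · intro X hX hrevX
        rcases Finset.mem_insert.mp hX with rfl | hX
        · simp [hN] at hrevX
        · exact h4 X (erase2 X hX).1 hrevX
      · intro X hX hrevX
        rcases Finset.mem_insert.mp hX with rfl | hX
        · simp [hN]
        · exact h5 X (erase2 X hX).1 hrevX

lemma reachable_inv {C : Config} (h : Reachable C) : Inv C := by
  induction h with
  | refl =>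
      refine ⟨?_, ?_, ?_, ?_, ?_⟩ <;> intro A hA <;> simp at hA
  | tail _ hstep ih => exact step_inv hstep ih

end SAEAux

/-- **Threshold invariant.** In every reachable configuration, every collection
`A` satisfies: every allegation `a ∈ A` has threshold `t_a ≤ Min(A) + |A|`. -/
theorem bucketing_threshold_invariant (C : Config) (hreach : Reachable C) :
    ∀ A ∈ C, ∀ a ∈ A.allegs, a.thr ≤ A.bmin + A.allegs.card :=
  (SAEAux.reachable_inv hreach).2.2.1
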